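/- arXiv:1503.00506 — 3 statements merged into one kernel-verified Lean document; each statement's English description precedes it below -/
import Mathlib

section
/- Let ρ be a nonzero Hermitian operator on a finite-dimensional complex Hilbert space, k ≥ 1, and v a Hermitian operator. If ∑_{j=1}^{k} ρ^{⊗(j−1)} ⊗ v ⊗ ρ^{⊗(k−j)} = 0, then v = 0. Consequently, the map ρ ↦ ρ^{⊗k} is an immersion on Herm(H) \ {0}. -/
/-!
Contract the mixed tensor sum against `M^{⊗k}`: each summand factorizes into traces, so the
contraction is `k · tr(ρM)^{k-1} · tr(vM)`, and it vanishes for every `M`. Since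
`tr(A²) = ‖A‖²_F` for Hermitian `A`, taking `M = ρ` gives `tr(vρ) = 0`, and then `M = ρ + v`
gives `k · tr(ρ²)^{k-1} · tr(v²) = 0`, hence `tr(v²) = 0` and `v = 0`.
-/

/-- The mixed tensor `ρ^{⊗(j−1)} ⊗ v ⊗ ρ^{⊗(k−j)}` summed over `j`, with index type
`Fin k → Fin d` (the `j`-th tensor factor carrying `v`, all others `ρ`). -/
noncomputable def mixedTensorSum {d : ℕ} (k : ℕ) (ρ v : Matrix (Fin d) (Fin d) ℂ) :
    Matrix (Fin k → Fin d) (Fin k → Fin d) ℂ :=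
  Matrix.of fun x y =>
    ∑ j : Fin k, (∏ l ∈ Finset.univ.erase j, ρ (x l) (y l)) * v (x j) (y j)

open Finset Matrix
open scoped ComplexOrder

section TensorContraction

variable {ι n R : Type*} [Fintype ι] [DecidableEq ι] [Fintype n] [CommSemiring R]

theorem Fintype.sum_sum_prod_eq_prod_sum_sum (g : ι → n → n → R) :
    ∑ x : ι → n, ∑ y : ι → n, ∏ l, g l (x l) (y l) = ∏ l, ∑ a, ∑ b, g l a b := by
  simp_rw [← Fintype.sum_prod_type', Fintype.prod_sum]
  exact Fintype.sum_equiv (Equiv.arrowProdEquivProdArrow ι (fun _ => n) (fun _ => n)).symm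
    _ _ fun _ => rfl

/-- `tr((N₁ ⊗ ⋯ ⊗ Nₖ) · M^{⊗k}) = ∏ₗ tr(Nₗ M)`, written out in coordinates. -/
theorem sum_sum_prod_mul_prod_eq_prod_trace (N : ι → Matrix n n R) (M : Matrix n n R) :
    ∑ x : ι → n, ∑ y : ι → n, (∏ l, N l (x l) (y l)) * ∏ l, M (y l) (x l) =
      ∏ l, (N l * M).trace := by
  calc _ = ∑ x : ι → n, ∑ y : ι → n, ∏ l, N l (x l) (y l) * M (y l) (x l) := by
        simp only [prod_mul_distrib]
    _ = ∏ l, ∑ a, ∑ b, N l a b * M b a :=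
        Fintype.sum_sum_prod_eq_prod_sum_sum fun l a b => N l a b * M b a
    _ = _ := by simp only [trace, diag_apply, mul_apply]

end TensorContraction

theorem Matrix.IsHermitian.trace_mul_self_eq_zero_iff {n R : Type*} [Fintype n]
    [PartialOrder R] [NonUnitalRing R] [StarRing R] [StarOrderedRing R] [NoZeroDivisors R]
    {A : Matrix n n R} (hA : A.IsHermitian) : (A * A).trace = 0 ↔ A = 0 := by
  nth_rewrite 1 [← hA]
  exact trace_conjTranspose_mul_self_eq_zero_iff

section MixedTensorSum

variable {d k : ℕ}

def mixedFactors (ρ v : Matrix (Fin d) (Fin d) ℂ) (j : Fin k) :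
    Fin k → Matrix (Fin d) (Fin d) ℂ :=
  Function.update (fun _ => ρ) j v

theorem mixedTensorSum_apply (ρ v : Matrix (Fin d) (Fin d) ℂ) (x y : Fin k → Fin d) :
    mixedTensorSum k ρ v x y = ∑ j, ∏ l, mixedFactors ρ v j l (x l) (y l) := by
  refine (of_apply _ x y).trans (sum_congr rfl fun j _ => ?_)
  rw [← mul_prod_erase univ _ (mem_univ j), mul_comm, mixedFactors, Function.update_self]
  congr 1
  exact prod_congr rfl fun l hl => by rw [Function.update_of_ne (ne_of_mem_erase hl)]

theorem prod_trace_mixedFactors_mul (ρ v M : Matrix (Fin d) (Fin d) ℂ) (j : Fin k) :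
    ∏ l, (mixedFactors ρ v j l * M).trace = (v * M).trace * (ρ * M).trace ^ (k - 1) := by
  rw [prod_congr rfl fun l _ => Function.apply_update (fun _ A => (A * M).trace) _ j v l,
    prod_update_of_mem (mem_univ j), prod_const, card_sdiff_of_subset (by simp)]
  simp

theorem sum_sum_mixedTensorSum_mul_prod (ρ v M : Matrix (Fin d) (Fin d) ℂ) :
    ∑ x : Fin k → Fin d, ∑ y : Fin k → Fin d, mixedTensorSum k ρ v x y * ∏ l, M (y l) (x l) =
      k * (ρ * M).trace ^ (k - 1) * (v * M).trace := by
  have hterm (x y : Fin k → Fin d) : mixedTensorSum k ρ v x y * ∏ l, M (y l) (x l) =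
      ∑ j, (∏ l, mixedFactors ρ v j l (x l) (y l)) * ∏ l, M (y l) (x l) := by
    rw [mixedTensorSum_apply, sum_mul]
  rw [sum_congr rfl fun x _ => sum_congr rfl fun y _ => hterm x y,
    sum_congr rfl fun x _ => sum_comm, sum_comm]
  simp_rw [sum_sum_prod_mul_prod_eq_prod_trace, prod_trace_mixedFactors_mul]
  rw [sum_const, card_univ, Fintype.card_fin, nsmul_eq_mul]
  ring

end MixedTensorSum

/-- Let `ρ ≠ 0` be a Hermitian matrix, `k ≥ 1`, and `v` Hermitian.
If `∑_{j=1}^{k} ρ^{⊗(j−1)} ⊗ v ⊗ ρ^{⊗(k−j)} = 0` then `v = 0`.  (Consequently the map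
`ρ ↦ ρ^{⊗k}` is an immersion on the nonzero Hermitian matrices.) -/
theorem mixedTensorSum_eq_zero_imp {d k : ℕ} (hk : 1 ≤ k)
    (ρ v : Matrix (Fin d) (Fin d) ℂ)
    (hρ : ρ.IsHermitian) (hρ0 : ρ ≠ 0) (hv : v.IsHermitian)
    (h : mixedTensorSum k ρ v = 0) :
    v = 0 := by
  have hcontr (M : Matrix (Fin d) (Fin d) ℂ) :
      (k : ℂ) * (ρ * M).trace ^ (k - 1) * (v * M).trace = 0 := by
    rw [← sum_sum_mixedTensorSum_mul_prod, h]
    simp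
  have hk0 : (k : ℂ) ≠ 0 := by exact_mod_cast (by omega : k ≠ 0)
  have hρρ : (ρ * ρ).trace ≠ 0 := hρ.trace_mul_self_eq_zero_iff.not.mpr hρ0
  have hvρ : (v * ρ).trace = 0 := by simpa [hk0, hρρ] using hcontr ρ
  have hρv : (ρ * v).trace = 0 := by rwa [trace_mul_comm]
  have hvv : (v * v).trace = 0 := by
    simpa [mul_add, trace_add, hρv, hvρ, hk0, hρρ] using hcontr (ρ + v)
  exact hv.trace_mul_self_eq_zero_iff.mp hvv
end

section
/- Let α = ∑_{i=1}^{r} λ_i e_i ⊗ f_i be a unit vector in H_A ⊗ H_B in Schmidt form, O a Hermitian operator on H_A, S a Hermitian operator on H_B, U a unitary on H_B, and P_α := ∑_{i=1}^{r} λ_i |e_i⟩⟨f_i| the operator from H_B to H_A. Then tr((O ⊗ U S U†) |α⟩⟨α|) = tr((P_α U)† O^T (P_α U) S), where O^T denotes the transpose of O with respect to the basis {e_i}. -/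
/-!
With `E`, `F` the matrices whose columns are the `e i`, `f i` and `D = diag λ`, we have
`α = vec (F D Eᵀ)` and `P U = E D (U† F)†`. Cycling outer factors round the trace turns the left
side into `tr (D H D G)` and the right side into `tr (D G D H)`, where `H = F† U S U† F` and
`G = E† OT E = (E† O E)ᵀ`; the two agree by cyclicity. The reality of `λ` enters as `D† = D`.
-/

open Matrix
open scoped Kronecker

namespace Matrix

variable {m n r R : Type*} [Fintype m]

theorem transpose_conjTranspose_mul_mul_transpose_apply [NonUnitalSemiring R] [Star R]
    (A : Matrix r m R) (M : Matrix m m R) (i j : r) :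
    (Aᵀᴴ * M * Aᵀ) i j = star (A i) ⬝ᵥ (M *ᵥ A j) := by
  rw [Matrix.mul_assoc]
  rfl

variable [Fintype n]

theorem trace_kronecker_mul_vecMulVec_vec [CommSemiring R] [StarRing R]
    (A : Matrix m m R) (B : Matrix n n R) (X : Matrix n m R) :
    ((A ⊗ₖ B) * vecMulVec (vec X) (star (vec X))).trace = (Xᴴ * B * X * Aᵀ).trace := by
  rw [mul_vecMulVec, trace_vecMulVec, kronecker_mulVec_vec, dotProduct_comm,
    star_vec_dotProduct_vec, Matrix.mul_assoc, Matrix.mul_assoc, Matrix.mul_assoc]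

theorem trace_conjTranspose_mul_mul_mul_eq_trace_compressions [Fintype r] [CommSemiring R]
    [StarRing R] (X : Matrix m r R) (Y : Matrix n r R) (D : Matrix r r R) (M : Matrix m m R)
    (N : Matrix n n R) :
    ((X * D * Yᴴ)ᴴ * M * (X * D * Yᴴ) * N).trace =
      (Dᴴ * (Xᴴ * M * X) * D * (Yᴴ * N * Y)).trace := by
  simp only [conjTranspose_mul, conjTranspose_conjTranspose, Matrix.mul_assoc]
  rw [trace_mul_comm Y]
  simp only [Matrix.mul_assoc]

end Matrix

theorem schmidt_trace_identity_general {a b r : ℕ}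
    (e : Fin r → (Fin a → ℂ)) (f : Fin r → (Fin b → ℂ))
    (lam : Fin r → ℝ)
    (α : Fin a × Fin b → ℂ)
    (hα : ∀ p, α p = ∑ i, (lam i : ℂ) * e i p.1 * f i p.2)
    (O : Matrix (Fin a) (Fin a) ℂ)
    (S : Matrix (Fin b) (Fin b) ℂ)
    (U : Matrix (Fin b) (Fin b) ℂ)
    (P : Matrix (Fin a) (Fin b) ℂ)
    (hP : ∀ x y, P x y = ∑ i, (lam i : ℂ) * e i x * (starRingEnd ℂ) (f i y))
    (OT : Matrix (Fin a) (Fin a) ℂ)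
    (hOT : ∀ i j, star (e i) ⬝ᵥ (OT *ᵥ e j) = star (e j) ⬝ᵥ (O *ᵥ e i)) :
    (Matrix.kroneckerMap (· * ·) O (U * S * star U) *
        Matrix.vecMulVec α (star α)).trace =
      ((P * U)ᴴ * OT * (P * U) * S).trace := by
  set E : Matrix (Fin a) (Fin r) ℂ := (of e)ᵀ
  set F : Matrix (Fin b) (Fin r) ℂ := (of f)ᵀ
  set D : Matrix (Fin r) (Fin r) ℂ := diagonal fun i => (lam i : ℂ)
  have hD : Dᴴ = D := by simp [D, diagonal_conjTranspose]
  have hα' : α = vec (F * D * Eᵀ) := by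
    ext p
    rw [vec, mul_apply]
    simp [hα, F, D, E, mul_diagonal, mul_comm, mul_left_comm]
  have hPU : P * U = E * D * (Uᴴ * F)ᴴ := by
    have hP' : P = E * D * Fᴴ := by
      ext x y
      rw [mul_apply]
      simp [hP, E, F, D, mul_diagonal, mul_comm]
    rw [hP', Matrix.mul_assoc _ Fᴴ, conjTranspose_mul, conjTranspose_conjTranspose]
  have hH : Fᴴ * (U * S * star U) * F = (Uᴴ * F)ᴴ * S * (Uᴴ * F) := by
    simp only [conjTranspose_mul, conjTranspose_conjTranspose, star_eq_conjTranspose,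
      Matrix.mul_assoc]
  have hOT' : Eᴴ * OT * E = (Eᴴ * O * E)ᵀ := by
    ext i j
    exact (transpose_conjTranspose_mul_mul_transpose_apply (of e) OT i j).trans
      ((hOT i j).trans (transpose_conjTranspose_mul_mul_transpose_apply (of e) O j i).symm)
  have hOtranspose : Eᵀᴴᴴ * Oᵀ * Eᵀᴴ = (Eᴴ * O * E)ᵀ := by
    rw [conjTranspose_conjTranspose, transpose_mul, transpose_mul, Matrix.mul_assoc]
    rfl
  rw [hα', ← conjTranspose_conjTranspose Eᵀ, trace_kronecker_mul_vecMulVec_vec, hPU,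
    trace_conjTranspose_mul_mul_mul_eq_trace_compressions,
    trace_conjTranspose_mul_mul_mul_eq_trace_compressions, hH, hOtranspose, ← hOT', hD,
    Matrix.mul_assoc (D * _), trace_mul_comm, ← Matrix.mul_assoc]

/-- Let `α = ∑_{i=1}^{r} λ_i e_i ⊗ f_i` be a unit vector in Schmidt form
(`e`, `f` orthonormal families, `λ_i > 0`), `O` Hermitian on `H_A`, `S` Hermitian on `H_B`,
`U` unitary on `H_B`, `P_α = ∑ λ_i |e_i⟩⟨f_i|`, and `O^T` the transpose of `O` with respect
to the basis `{e_i}` (i.e. `⟨e_i|O^T|e_j⟩ = ⟨e_j|O|e_i⟩`).  Then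
`tr((O ⊗ U S U†) |α⟩⟨α|) = tr((P_α U)† O^T (P_α U) S)`. -/
theorem schmidt_trace_identity {a b r : ℕ}
    (e : Fin r → (Fin a → ℂ)) (f : Fin r → (Fin b → ℂ))
    (he : ∀ i j, star (e i) ⬝ᵥ e j = if i = j then 1 else 0)
    (hf : ∀ i j, star (f i) ⬝ᵥ f j = if i = j then 1 else 0)
    (lam : Fin r → ℝ) (hlam : ∀ i, 0 < lam i)
    (α : Fin a × Fin b → ℂ)
    (hα : ∀ p, α p = ∑ i, (lam i : ℂ) * e i p.1 * f i p.2)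
    (hunit : star α ⬝ᵥ α = 1)
    (O : Matrix (Fin a) (Fin a) ℂ) (hO : O.IsHermitian)
    (S : Matrix (Fin b) (Fin b) ℂ) (hS : S.IsHermitian)
    (U : Matrix (Fin b) (Fin b) ℂ) (hU : U ∈ Matrix.unitaryGroup (Fin b) ℂ)
    (P : Matrix (Fin a) (Fin b) ℂ)
    (hP : ∀ x y, P x y = ∑ i, (lam i : ℂ) * e i x * (starRingEnd ℂ) (f i y))
    (OT : Matrix (Fin a) (Fin a) ℂ)
    (hOT : ∀ i j, star (e i) ⬝ᵥ (OT *ᵥ e j) = star (e j) ⬝ᵥ (O *ᵥ e i)) :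
    (Matrix.kroneckerMap (· * ·) O (U * S * star U) *
        Matrix.vecMulVec α (star α)).trace =
      ((P * U)ᴴ * OT * (P * U) * S).trace :=
  schmidt_trace_identity_general e f lam α hα O S U P hP OT hOT
end

section
/- Let M ∈ ℂ^{r×n} with r ≤ n have full rank r, and flatten it into a sequence M_1,...,M_{nr} (setting M_k = 0 for k > nr). For k ≥ 1 define G_k(M) := ∑_{i : 1 ≤ i ≤ k+1−i} M_i · conj(M_{k+1−i}). If two full-rank matrices M, M' satisfy G_k(M) = G_k(M') for all k ∈ {1,...,nr+n−1}, then there exists φ ∈ ℝ with M' = e^{iφ} M. -/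
/-!
Let `m` be the first index with `f m ≠ 0`; it is at most `n` because the first row of a full-rank
matrix is nonzero. For `j ≤ m` the only possibly nonzero term of `G_{2j-1}` is `f j * conj (f j)`,
so `g` vanishes below `m` and `|g m| = |f m|`; put `c = g m / f m`, so `|c| = 1`. For `l > m`, the
term of `G_{m+l-1}` with `i = m` is `f m * conj (f l)` and all others involve only indices `< l`;
since `G` is invariant under `f ↦ c f`, once `g = c f` below `l` it follows that `g l = c * f l`.
-/

open Finset

theorem Matrix.linearIndependent_row_of_rank_eq_card {R m n : Type*} [Field R] [Fintype m]
    [Fintype n] {A : Matrix m n R} (hA : A.rank = Fintype.card m) : LinearIndependent R A.row := by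
  rw [linearIndependent_iff_card_eq_finrank_span, ← hA, A.rank_eq_finrank_span_row, Set.finrank]

section HalfAutocorr

variable {K : Type*} [Field K] [StarRing K]

/-- The paper's `G_k`. -/
def halfAutocorr (f : ℕ → K) (k : ℕ) : K :=
  ∑ i ∈ (Icc 1 k).filter (fun i => 2 * i ≤ k + 1), f i * star (f (k + 1 - i))

theorem halfAutocorr_const_mul (c : K) (f : ℕ → K) (k : ℕ) :
    halfAutocorr (fun i => c * f i) k = c * star c * halfAutocorr f k := by
  simp only [halfAutocorr, mul_sum, star_mul']
  exact sum_congr rfl fun _ _ => by ring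

theorem halfAutocorr_two_mul_sub_one {f : ℕ → K} {j : ℕ} (hj : 0 < j)
    (hlt : ∀ i < j, f i = 0) : halfAutocorr f (2 * j - 1) = f j * star (f j) := by
  rw [halfAutocorr, sum_eq_single j]
  · rw [show 2 * j - 1 + 1 - j = j by omega]
  · intro i hi hij
    simp only [mem_filter, mem_Icc] at hi
    rw [hlt i (by omega), zero_mul]
  · simp only [mem_filter, mem_Icc]
    omega

theorem eq_of_halfAutocorr_eq_of_eq_of_lt {f g : ℕ → K} {m l : ℕ} (hm : 0 < m) (hml : m < l)
    (hf : ∀ i < m, f i = 0) (hfm : f m ≠ 0) (hfg : ∀ i < l, f i = g i)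
    (h : halfAutocorr f (m + l - 1) = halfAutocorr g (m + l - 1)) : f l = g l := by
  have hmem : m ∈ (Icc 1 (m + l - 1)).filter (fun i => 2 * i ≤ m + l - 1 + 1) := by
    simp only [mem_filter, mem_Icc]
    omega
  have hrest : ∀ i ∈ ((Icc 1 (m + l - 1)).filter (fun i => 2 * i ≤ m + l - 1 + 1)).erase m,
      f i * star (f (m + l - 1 + 1 - i)) = g i * star (g (m + l - 1 + 1 - i)) := by
    intro i hi
    simp only [mem_erase, mem_filter, mem_Icc] at hi
    rcases lt_or_gt_of_ne hi.1 with him | hmi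
    · rw [hf i him, ← hfg i (by omega), hf i him, zero_mul, zero_mul]
    · rw [hfg i (by omega), hfg _ (by omega)]
  rw [halfAutocorr, halfAutocorr, ← add_sum_erase _ _ hmem, ← add_sum_erase _ _ hmem,
    sum_congr rfl hrest, add_left_inj, show m + l - 1 + 1 - m = l by omega,
    ← hfg m hml] at h
  exact star_injective (mul_left_cancel₀ hfm h)

theorem exists_eq_const_mul_of_halfAutocorr_eq_of_lt_eq_zero {f g : ℕ → K} {m N : ℕ}
    (hm : 0 < m) (hfm : f m ≠ 0) (hf : ∀ i < m, f i = 0) (hg0 : g 0 = 0)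
    (hfN : ∀ i, N < i → f i = 0) (hgN : ∀ i, N < i → g i = 0)
    (hG : ∀ k ∈ Icc 1 (N + m - 1), halfAutocorr f k = halfAutocorr g k) :
    ∃ c : K, star c * c = 1 ∧ ∀ l, g l = c * f l := by
  have hmN : m ≤ N := le_of_not_gt fun h => hfm (hfN m h)
  have hG_odd : ∀ j, 0 < j → j ≤ m → halfAutocorr f (2 * j - 1) = halfAutocorr g (2 * j - 1) :=
    fun j hj hjm => hG _ (by simp only [mem_Icc]; omega)
  have hg : ∀ i < m, g i = 0 := by
    intro i
    induction i using Nat.strong_induction_on with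
    | _ i ih =>
      intro him
      rcases Nat.eq_zero_or_pos i with rfl | hi
      · exact hg0
      have hlt : ∀ j < i, g j = 0 := fun j hji => ih j hji (hji.trans him)
      have hodd := hG_odd i hi him.le
      rw [halfAutocorr_two_mul_sub_one hi (fun j hji => hf j (hji.trans him)),
        halfAutocorr_two_mul_sub_one hi hlt, hf i him, zero_mul, eq_comm, mul_eq_zero,
        star_eq_zero, or_self] at hodd
      exact hodd
  have hnorm : g m * star (g m) = f m * star (f m) := by
    rw [← halfAutocorr_two_mul_sub_one hm hf, ← halfAutocorr_two_mul_sub_one hm hg]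
    exact (hG_odd m hm le_rfl).symm
  set c := g m / f m
  have hc : star c * c = 1 := by
    rw [star_div₀, div_mul_div_comm, mul_comm (star (g m)), hnorm,
      mul_comm (star (f m)), div_self (mul_ne_zero hfm (star_ne_zero.mpr hfm))]
  refine ⟨c, hc, fun l => ?_⟩
  induction l using Nat.strong_induction_on with
  | _ l ih =>
    rcases lt_trichotomy l m with hlm | rfl | hml
    · rw [hf l hlm, hg l hlm, mul_zero]
    · exact (div_mul_cancel₀ _ hfm).symm
    by_cases hlN : N < l
    · rw [hfN l hlN, hgN l hlN, mul_zero]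
    refine (eq_of_halfAutocorr_eq_of_eq_of_lt (f := fun i => c * f i) hm hml
      (fun i hi => by simp only [hf i hi, mul_zero]) ?_ (fun i hi => (ih i hi).symm) ?_).symm
    · exact mul_ne_zero (left_ne_zero_of_mul_eq_one (by rwa [mul_comm] at hc)) hfm
    · rw [halfAutocorr_const_mul, mul_comm c, hc, one_mul]
      exact hG _ (by simp only [mem_Icc]; omega)

theorem exists_eq_const_mul_of_halfAutocorr_eq {f g : ℕ → K} {m N : ℕ} (hfm : f m ≠ 0)
    (hf0 : f 0 = 0) (hg0 : g 0 = 0) (hfN : ∀ i, N < i → f i = 0) (hgN : ∀ i, N < i → g i = 0)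
    (hG : ∀ k ∈ Icc 1 (N + m - 1), halfAutocorr f k = halfAutocorr g k) :
    ∃ c : K, star c * c = 1 ∧ ∀ l, g l = c * f l := by
  classical
  have hex : ∃ i, f i ≠ 0 := ⟨m, hfm⟩
  have hfirst_le : Nat.find hex ≤ m := Nat.find_min' hex hfm
  have hfirst_pos : 0 < Nat.find hex :=
    Nat.pos_of_ne_zero fun h => Nat.find_spec hex (h ▸ hf0)
  exact exists_eq_const_mul_of_halfAutocorr_eq_of_lt_eq_zero hfirst_pos (Nat.find_spec hex)
    (fun i hi => not_not.mp (Nat.find_min hex hi)) hg0 hfN hgN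
    fun k hk => hG k (Icc_subset_Icc_right (by omega) hk)

end HalfAutocorr

theorem phase_recovery_from_products_general {r n : ℕ} (hr : 1 ≤ r)
    (A B : Matrix (Fin r) (Fin n) ℂ)
    (hA : A.rank = r)
    (f g : ℕ → ℂ)
    (hf : ∀ (i : Fin r) (j : Fin n), f (n * (i : ℕ) + (j : ℕ) + 1) = A i j)
    (hf0 : ∀ k : ℕ, k = 0 ∨ n * r < k → f k = 0)
    (hg : ∀ (i : Fin r) (j : Fin n), g (n * (i : ℕ) + (j : ℕ) + 1) = B i j)
    (hg0 : ∀ k : ℕ, k = 0 ∨ n * r < k → g k = 0)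
    (hG : ∀ k ∈ Finset.Icc 1 (n * r + n - 1),
      ∑ i ∈ (Finset.Icc 1 k).filter (fun i => 2 * i ≤ k + 1),
          f i * (starRingEnd ℂ) (f (k + 1 - i))
        = ∑ i ∈ (Finset.Icc 1 k).filter (fun i => 2 * i ≤ k + 1),
            g i * (starRingEnd ℂ) (g (k + 1 - i))) :
    ∃ φ : ℝ, B = Complex.exp (φ * Complex.I) • A := by
  have hrows : LinearIndependent ℂ A.row :=
    Matrix.linearIndependent_row_of_rank_eq_card (by rw [hA, Fintype.card_fin])
  obtain ⟨j₀, hj₀⟩ := Function.ne_iff.mp (hrows.ne_zero ⟨0, hr⟩)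
  have hfj₀ : f (j₀ + 1) ≠ 0 := by simpa using (hf ⟨0, hr⟩ j₀).trans_ne hj₀
  obtain ⟨c, hc, hgf⟩ := exists_eq_const_mul_of_halfAutocorr_eq hfj₀ (hf0 0 (.inl rfl))
    (hg0 0 (.inl rfl)) (fun k hk => hf0 k (.inr hk)) (fun k hk => hg0 k (.inr hk))
    fun k hk => hG k (Icc_subset_Icc_right (by omega) hk)
  obtain ⟨φ, rfl⟩ := (Complex.norm_eq_one_iff c).mp
    (CStarRing.norm_of_mem_unitary (Unitary.mem_iff_star_mul_self.mpr hc))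
  refine ⟨φ, Matrix.ext fun i j => ?_⟩
  rw [Matrix.smul_apply, smul_eq_mul, ← hf i j, ← hg i j, hgf]

/-- Flatten a full-rank matrix `M ∈ ℂ^{r×n}` (`1 ≤ r ≤ n`) into a
sequence `M_1,...,M_{nr}` (with `M_k = 0` for `k > nr` and `M_0 = 0`), and for `k ≥ 1` set
`G_k(M) := ∑_{1 ≤ i ≤ k+1−i} M_i · conj(M_{k+1−i})`.  If two full-rank matrices `M, M'`
satisfy `G_k(M) = G_k(M')` for all `k ∈ {1,...,nr+n−1}`, then `M' = e^{iφ} M` for some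
`φ ∈ ℝ`. -/
theorem phase_recovery_from_products {r n : ℕ} (hr : 1 ≤ r) (hrn : r ≤ n)
    (A B : Matrix (Fin r) (Fin n) ℂ)
    (hA : A.rank = r) (hB : B.rank = r)
    (f g : ℕ → ℂ)
    (hf : ∀ (i : Fin r) (j : Fin n), f (n * (i : ℕ) + (j : ℕ) + 1) = A i j)
    (hf0 : ∀ k : ℕ, k = 0 ∨ n * r < k → f k = 0)
    (hg : ∀ (i : Fin r) (j : Fin n), g (n * (i : ℕ) + (j : ℕ) + 1) = B i j)
    (hg0 : ∀ k : ℕ, k = 0 ∨ n * r < k → g k = 0)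
    (hG : ∀ k ∈ Finset.Icc 1 (n * r + n - 1),
      ∑ i ∈ (Finset.Icc 1 k).filter (fun i => 2 * i ≤ k + 1),
          f i * (starRingEnd ℂ) (f (k + 1 - i))
        = ∑ i ∈ (Finset.Icc 1 k).filter (fun i => 2 * i ≤ k + 1),
            g i * (starRingEnd ℂ) (g (k + 1 - i))) :
    ∃ φ : ℝ, B = Complex.exp (φ * Complex.I) • A :=
  phase_recovery_from_products_general hr A B hA f g hf hf0 hg hg0 hG
end
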